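/- If Q is a complex polynomial of degree less than n and P is a monic polynomial of degree n, then the average of Q over the n roots (with multiplicity) of P(Y) = P(z) is constant in z. -/

import Mathlib

/-!
For `i < n = deg P`, the coefficient of `Y ^ (n - i)` in `P(Y) - P(z)` does not depend on `z`,
and neither does the leading coefficient, so by Vieta the elementary symmetric functions
`e₁, …, e_{n-1}` of the roots of `P(Y) - P(z)` are independent of `z`. Newton's identities
express the power sums `p_k`, `k < n`, through `e₁, …, e_k`, so these are independent of `z`
too, and `∑ Q(y)` over the roots is a linear combination of them since `deg Q < n`.
-/

open Polynomial Finset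

namespace Multiset

variable {R : Type*} [CommRing R]

theorem sum_map_pow_eq_mul_esymm_sub_sum (s : Multiset R) (k : ℕ) (hk : 0 < k) :
    (s.map (· ^ k)).sum = (-1) ^ (k + 1) * k * s.esymm k -
      ∑ a ∈ HasAntidiagonal.antidiagonal k with a.1 ∈ Set.Ioo 0 k,
        (-1) ^ a.1 * s.esymm a.1 * (s.map (· ^ a.2)).sum := by
  obtain ⟨l, rfl⟩ : ∃ l : List R, (l : Multiset R) = s := Quot.exists_rep s
  have huniv : (univ.val.map l.get : Multiset R) = l := by
    rw [Fin.univ_val_map, List.ofFn_get]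
  have hpsum (m : ℕ) : MvPolynomial.aeval l.get (MvPolynomial.psum (Fin l.length) R m) =
      ((l : Multiset R).map (· ^ m)).sum := by
    simp only [MvPolynomial.psum, map_sum, map_pow, MvPolynomial.aeval_X, ← huniv, map_map]
    rfl
  have hesymm (m : ℕ) : MvPolynomial.aeval l.get (MvPolynomial.esymm (Fin l.length) R m) =
      (l : Multiset R).esymm m := by
    rw [MvPolynomial.aeval_esymm_eq_multiset_esymm, huniv]
  have newton := congrArg (MvPolynomial.aeval l.get)
    (MvPolynomial.psum_eq_mul_esymm_sub_sum (Fin l.length) R k hk)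
  simpa only [map_sub, map_mul, map_sum, map_pow, map_neg, map_one, map_natCast, hesymm, hpsum]
    using newton

theorem sum_map_pow_eq_of_esymm_eq {s t : Multiset R} (hcard : card s = card t) {k : ℕ}
    (h : ∀ i, 0 < i → i ≤ k → s.esymm i = t.esymm i) :
    (s.map (· ^ k)).sum = (t.map (· ^ k)).sum := by
  induction k using Nat.strong_induction_on with
  | _ k ih =>
    rcases Nat.eq_zero_or_pos k with rfl | hk
    · simp [hcard]
    rw [sum_map_pow_eq_mul_esymm_sub_sum s k hk, sum_map_pow_eq_mul_esymm_sub_sum t k hk,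
      h k hk le_rfl]
    congr 1
    refine Finset.sum_congr rfl fun ⟨a, b⟩ hab => ?_
    simp only [Finset.mem_filter, HasAntidiagonal.mem_antidiagonal, Set.mem_Ioo] at hab
    rw [h a hab.2.1 hab.2.2.le, ih b (by omega) fun i hi hib => h i hi (by omega)]

theorem sum_map_eval_eq_of_esymm_eq {s t : Multiset R} (hcard : card s = card t) {Q : R[X]}
    {n : ℕ} (hQ : Q.natDegree < n) (h : ∀ i, 0 < i → i < n → s.esymm i = t.esymm i) :
    (s.map Q.eval).sum = (t.map Q.eval).sum := by
  simp only [eval_eq_sum_range' hQ, sum_map_sum, sum_map_mul_left]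
  refine Finset.sum_congr rfl fun k hk => ?_
  rw [sum_map_pow_eq_of_esymm_eq hcard fun i hi hik => h i hi (hik.trans_lt (mem_range.mp hk))]

end Multiset

namespace Polynomial

variable {R : Type*} [CommRing R] [IsDomain R]

theorem esymm_roots_eq_of_coeff_eq {p q : R[X]} (hp : p.roots.card = p.natDegree)
    (hq : q.roots.card = q.natDegree) (hdeg : p.natDegree = q.natDegree)
    (hlc : p.leadingCoeff = q.leadingCoeff) {i : ℕ} (hi : i ≤ p.natDegree)
    (hcoeff : p.coeff (p.natDegree - i) = q.coeff (p.natDegree - i)) :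
    p.roots.esymm i = q.roots.esymm i := by
  have hvieta_p := coeff_eq_esymm_roots_of_card hp (k := p.natDegree - i) (by omega)
  have hvieta_q := coeff_eq_esymm_roots_of_card hq (k := p.natDegree - i) (by omega)
  rw [← hdeg, ← hlc, Nat.sub_sub_self hi] at hvieta_q
  rw [Nat.sub_sub_self hi, hcoeff, hvieta_q] at hvieta_p
  by_cases hp0 : p = 0
  · have hq0 : q = 0 := leadingCoeff_eq_zero.mp (by rw [← hlc, hp0, leadingCoeff_zero])
    rw [hp0, hq0]
  refine (mul_left_cancel₀ ?_ hvieta_p).symm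
  exact mul_ne_zero (leadingCoeff_ne_zero.mpr hp0) (pow_ne_zero _ (neg_ne_zero.mpr one_ne_zero))

theorem sum_map_eval_roots_sub_C_eq {K : Type*} [Field K] [IsAlgClosed K] {P Q : K[X]}
    (hQ : Q.natDegree < P.natDegree) (a b : K) :
    ((P - C a).roots.map Q.eval).sum = ((P - C b).roots.map Q.eval).sum := by
  have hcard (c : K) : (P - C c).roots.card = P.natDegree := by
    rw [IsAlgClosed.card_roots_eq_natDegree, natDegree_sub_C]
  have hlc (c : K) : (P - C c).leadingCoeff = P.leadingCoeff :=
    leadingCoeff_sub_of_degree_lt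
      (degree_C_le.trans_lt (natDegree_pos_iff_degree_pos.mp (by omega)))
  refine Multiset.sum_map_eval_eq_of_esymm_eq ((hcard a).trans (hcard b).symm) hQ
    fun i hi hin => ?_
  refine esymm_roots_eq_of_coeff_eq IsAlgClosed.card_roots_eq_natDegree
    IsAlgClosed.card_roots_eq_natDegree (natDegree_sub_C.trans natDegree_sub_C.symm)
    ((hlc a).trans (hlc b).symm) (by rw [natDegree_sub_C]; omega) ?_
  simp only [natDegree_sub_C, coeff_sub, coeff_C, if_neg (show P.natDegree - i ≠ 0 by omega)]

end Polynomial

theorem stmt_7_general (P : Polynomial ℂ) (n : ℕ) (hn : P.natDegree = n)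
    (Q : Polynomial ℂ) (hQ : Q.natDegree < n) :
    ∃ c : ℂ, ∀ z : ℂ,
      (((P - Polynomial.C (P.eval z)).roots).map Q.eval).sum = n • c := by
  have hn0 : (n : ℂ) ≠ 0 := Nat.cast_ne_zero.mpr (by omega)
  refine ⟨((P - C 0).roots.map Q.eval).sum / n, fun z => ?_⟩
  rw [sum_map_eval_roots_sub_C_eq (hn ▸ hQ) _ 0, nsmul_eq_mul, mul_div_cancel₀ _ hn0]

theorem stmt_7 (P : Polynomial ℂ) (hP : P.Monic) (n : ℕ) (hn : P.natDegree = n)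
    (hn1 : 1 ≤ n) (Q : Polynomial ℂ) (hQ : Q.natDegree < n) :
    ∃ c : ℂ, ∀ z : ℂ,
      (((P - Polynomial.C (P.eval z)).roots).map Q.eval).sum = n • c :=
  stmt_7_general P n hn Q hQ
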